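/- arXiv:2307.10760 — 8 statements merged into one kernel-verified Lean document; each statement's English description precedes it below -/
import Mathlib

section
/- Fix 0 ≤ ε < 1 and define l_ε : ℤ → ℝ by l_ε(0) = 0 and l_ε(n) = |n| + ε^|n| for n ≠ 0. Let c_ε(n,m) := (1/2)(l_ε(n) + l_ε(m) - l_ε(n - m)) denote the Gromov product. Then l_ε is (3ε/2)-hyperbolic: for all n₁, n₂, n₃ ∈ ℤ and m ∈ ℝ, if c_ε(n₁, n₂) ≥ m and c_ε(n₂, n₃) ≥ m then c_ε(n₁, n₃) ≥ m - 3ε/2. -/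
lemma real_hyp_aux (x y z m : ℝ) (h1 : 2 * m ≤ |x| + |y| - |x - y|)
    (h2 : 2 * m ≤ |y| + |z| - |y - z|) : 2 * m ≤ |x| + |z| - |x - z| := by
  rcases abs_cases x with ⟨hx, hx'⟩ | ⟨hx, hx'⟩ <;>
  rcases abs_cases y with ⟨hy, hy'⟩ | ⟨hy, hy'⟩ <;>
  rcases abs_cases z with ⟨hz, hz'⟩ | ⟨hz, hz'⟩ <;>
  rcases abs_cases (x - y) with ⟨hxy, hxy'⟩ | ⟨hxy, hxy'⟩ <;>
  rcases abs_cases (y - z) with ⟨hyz, hyz'⟩ | ⟨hyz, hyz'⟩ <;>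
  rcases abs_cases (x - z) with ⟨hxz, hxz'⟩ | ⟨hxz, hxz'⟩ <;>
  linarith

theorem stmt_2 (ε : ℝ) (hε0 : 0 ≤ ε) (hε1 : ε < 1) :
    let l : ℤ → ℝ := fun n => if n = 0 then 0 else (|n| : ℝ) + ε ^ n.natAbs
    let c : ℤ → ℤ → ℝ := fun n m => (1 / 2) * (l n + l m - l (n - m))
    ∀ n₁ n₂ n₃ : ℤ, ∀ m : ℝ,
      c n₁ n₂ ≥ m → c n₂ n₃ ≥ m → c n₁ n₃ ≥ m - 3 * ε / 2 := by
  intro l c n₁ n₂ n₃ m h1 h2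
  have hge : ∀ n : ℤ, (|(n : ℝ)|) ≤ l n := by
    intro n
    simp only [l]
    split_ifs with h
    · simp [h]
    · have : 0 ≤ ε ^ n.natAbs := pow_nonneg hε0 _
      linarith
  have hle : ∀ n : ℤ, l n ≤ (|(n : ℝ)|) + ε := by
    intro n
    simp only [l]
    split_ifs with h
    · positivity
    · have h1 : 1 ≤ n.natAbs := Nat.one_le_iff_ne_zero.mpr (Int.natAbs_ne_zero.mpr h)
      have h2 : ε ^ n.natAbs ≤ ε ^ 1 := pow_le_pow_of_le_one hε0 hε1.le h1
      rw [pow_one] at h2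
      linarith
  simp only [c, ge_iff_le] at h1 h2 ⊢
  have k1 : 2 * (m - ε) ≤ |((n₁ : ℝ))| + |((n₂ : ℝ))| - |((n₁ : ℝ)) - ((n₂ : ℝ))| := by
    have := hle n₁; have := hle n₂; have := hge (n₁ - n₂)
    push_cast at *
    linarith
  have k2 : 2 * (m - ε) ≤ |((n₂ : ℝ))| + |((n₃ : ℝ))| - |((n₂ : ℝ)) - ((n₃ : ℝ))| := by
    have := hle n₂; have := hle n₃; have := hge (n₂ - n₃)
    push_cast at *
    linarith
  have k3 := real_hyp_aux _ _ _ _ k1 k2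
  have := hge n₁; have := hge n₃; have := hle (n₁ - n₃)
  push_cast at *
  linarith
end

section
/- Define l : ℤ → ℝ by l(n) = log(|n| + 1). There is no submonoid M of (ℝ, +) generated by finitely many positive reals α₁, …, α_k such that l(n) ∈ M for all n ∈ ℤ. (In particular, taking α_i the edge lengths, l cannot equal a based length function of a co-compact isometric ℤ-action on a metric graph.) -/
open Real Filter Asymptotics

theorem stmt_5 :
    ¬ ∃ (k : ℕ) (α : Fin k → ℝ), (∀ i, 0 < α i) ∧
      ∀ n : ℤ, ∃ c : Fin k → ℕ,
        Real.log ((|n| : ℝ) + 1) = ∑ i, (c i : ℝ) * α i := by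
  rintro ⟨k, α, hpos, h⟩
  -- restate over ℕ
  have h' : ∀ n : ℕ, ∃ c : Fin k → ℕ,
      Real.log ((n : ℝ) + 1) = ∑ i, (c i : ℝ) * α i := by
    intro n
    have := h (n : ℤ)
    simpa using this
  choose c hc using h'
  rcases Nat.eq_zero_or_pos k with hk | hk
  · subst hk
    have h1 := hc 1
    norm_num at h1
  -- k ≥ 1 : let a be the minimum edge length
  have hne : (Finset.univ : Finset (Fin k)).Nonempty := by
    simpa [Finset.univ_nonempty_iff] using Fin.pos_iff_nonempty.mp hk
  set a : ℝ := Finset.univ.inf' hne α with ha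
  have ha0 : 0 < a := by
    apply Finset.lt_inf'_iff hne |>.mpr
    intro i _; exact hpos i
  have hale : ∀ i, a ≤ α i := fun i => Finset.inf'_le _ (Finset.mem_univ i)
  -- counting bound: for all N, N+1 ≤ (B+1)^k with B = ⌈log(N+1)/a⌉₊
  have count : ∀ N : ℕ, N + 1 ≤ (⌈Real.log ((N:ℝ)+1) / a⌉₊ + 1) ^ k := by
    intro N
    set B := ⌈Real.log ((N:ℝ)+1) / a⌉₊ with hB
    have hbound : ∀ n : Fin (N+1), ∀ i, c n i < B + 1 := by
      intro n i
      have hsumle : (c n i : ℝ) * α i ≤ Real.log ((n:ℝ)+1) := by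
        rw [hc n]
        exact Finset.single_le_sum (f := fun j => (c (n:ℕ) j : ℝ) * α j)
            (fun j _ => mul_nonneg (by positivity) (hpos j).le) (Finset.mem_univ i)
      have hlogle : Real.log ((n:ℝ)+1) ≤ Real.log ((N:ℝ)+1) := by
        apply Real.log_le_log (by positivity)
        have : (n : ℝ) ≤ N := by exact_mod_cast Nat.lt_succ_iff.mp n.isLt
        linarith
      have h1 : (c n i : ℝ) * a ≤ Real.log ((N:ℝ)+1) := by
        calc (c n i : ℝ) * a ≤ (c n i : ℝ) * α i := by
              apply mul_le_mul_of_nonneg_left (hale i) (by positivity)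
          _ ≤ _ := le_trans hsumle hlogle
      have h2 : (c n i : ℝ) ≤ Real.log ((N:ℝ)+1) / a :=
        (le_div_iff₀ ha0).mpr h1
      have h3 : (c n i : ℝ) ≤ (B : ℝ) := h2.trans (Nat.le_ceil _)
      have : c n i ≤ B := by exact_mod_cast h3
      omega
    have hinj : Function.Injective
        (fun n : Fin (N+1) => fun i => (⟨c n i, hbound n i⟩ : Fin (B+1))) := by
      intro m n hmn
      have hcmn : ∀ i, c m i = c n i := by
        intro i
        have := congrFun hmn i
        simpa using congrArg Fin.val this
      have hsum : Real.log ((m:ℝ)+1) = Real.log ((n:ℝ)+1) := by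
        rw [hc m, hc n]
        exact Finset.sum_congr rfl fun i _ => by rw [hcmn i]
      have hm : ((m:ℕ):ℝ) + 1 = ((n:ℕ):ℝ) + 1 := by
        have := Real.log_injOn_pos (by simp; positivity) (by simp; positivity) hsum
        simpa using this
      have hm' : ((m:ℕ):ℝ) = ((n:ℕ):ℝ) := by linarith
      have : (m : ℕ) = n := by exact_mod_cast hm'
      exact Fin.ext this
    have := Fintype.card_le_of_injective _ hinj
    simpa using this
  -- asymptotics: (log x / a + 2)^k =o x
  have hlo : (fun x : ℝ => (Real.log x / a + 2) ^ k) =o[atTop] id := by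
    have h1 : (fun x : ℝ => (Real.log x / a + 2) ^ k)
        =O[atTop] (fun x => Real.log x ^ k) := by
      apply IsBigO.of_bound ((2/a)^k)
      filter_upwards [Filter.eventually_ge_atTop (Real.exp (2 * a))] with x hx
      simp only [Real.norm_eq_abs]
      have hlog : 2 * a ≤ Real.log x := by
        rw [← Real.log_exp (2 * a)]
        exact Real.log_le_log (Real.exp_pos _) hx
      have hl0 : 0 ≤ Real.log x := le_trans (by positivity) hlog
      have key : Real.log x / a + 2 ≤ 2 / a * Real.log x := by
        rw [div_add' _ _ _ ha0.ne', div_mul_eq_mul_div, div_le_div_iff₀ ha0 ha0]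
        nlinarith
      calc |(Real.log x / a + 2) ^ k| = (Real.log x / a + 2) ^ k := by
            rw [abs_of_nonneg]; positivity
        _ ≤ (2 / a * Real.log x) ^ k :=
            pow_le_pow_left₀ (by positivity) key k
        _ = (2/a)^k * Real.log x ^ k := mul_pow _ _ _
        _ = (2/a)^k * |Real.log x ^ k| := by rw [abs_of_nonneg (by positivity)]
    exact h1.trans_isLittleO Real.isLittleO_pow_log_id_atTop
  have hev : ∀ᶠ x : ℝ in atTop, (Real.log x / a + 2) ^ k < x := by
    have := hlo.bound (c := 1/2) (by norm_num)
    filter_upwards [this, Filter.eventually_ge_atTop (1:ℝ)] with x hx hx1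
    have h0 : (0:ℝ) < x := lt_of_lt_of_le one_pos hx1
    have hbase : (0:ℝ) ≤ Real.log x / a + 2 := by
      have := Real.log_nonneg hx1; positivity
    simp only [Real.norm_eq_abs, id] at hx
    rw [abs_of_nonneg (pow_nonneg hbase k), abs_of_nonneg h0.le] at hx
    linarith
  obtain ⟨x₀, hx₀⟩ := hev.exists_forall_of_atTop
  obtain ⟨N, hN⟩ := exists_nat_ge x₀
  have hx : x₀ ≤ (N:ℝ) + 1 := by linarith
  have hlt := hx₀ _ hx
  have hBle : (⌈Real.log ((N:ℝ)+1) / a⌉₊ : ℝ) + 1 ≤ Real.log ((N:ℝ)+1) / a + 2 := by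
    have h0 : (0:ℝ) ≤ Real.log ((N:ℝ)+1) / a := by
      have : (0:ℝ) ≤ Real.log ((N:ℝ)+1) := Real.log_nonneg (by linarith)
      positivity
    have := Nat.ceil_lt_add_one h0
    linarith
  have h1 : ((N:ℝ) + 1) ≤ ((⌈Real.log ((N:ℝ)+1) / a⌉₊ + 1) ^ k : ℕ) := by
    exact_mod_cast count N
  have h2 : (((⌈Real.log ((N:ℝ)+1) / a⌉₊ + 1) ^ k : ℕ) : ℝ) ≤ (Real.log ((N:ℝ)+1) / a + 2) ^ k := by
    push_cast
    exact pow_le_pow_left₀ (by positivity) hBle k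
  linarith
end

section
/- Define l : ℤ → ℝ by l(0) = 0 and l(n) = |n| + (1/2)^|n| for n ≠ 0. There do not exist finitely many positive real numbers α₁, …, α_k such that every value l(n), n ∈ ℤ, lies in the additive submonoid of ℝ generated by α₁, …, α_k. -/
/-!
Every value `l n` is rational, and all of them lie in the finitely generated subgroup
`M = ℤ α₁ + ⋯ + ℤ αₖ` of `ℝ`. Since `ℤ` is noetherian, the rationals lying in `M` form a finitely
generated subgroup of `ℚ`, whose denominators are therefore bounded. But `l n = n + 2⁻ⁿ` has
denominator `2ⁿ` for `n ≥ 1`.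
-/

open Submodule

namespace Rat

def denDvdSubmodule (D : ℕ) : Submodule ℤ ℚ where
  carrier := {q | q.den ∣ D}
  zero_mem' := one_dvd D
  add_mem' {q r} hq hr := (add_den_dvd_lcm q r).trans (Nat.lcm_dvd hq hr)
  smul_mem' z q hq := by
    simpa [zsmul_eq_mul] using (mul_den_dvd (z : ℚ) q).trans (by simpa using hq)

theorem bddAbove_den_of_fg {N : Submodule ℤ ℚ} (hN : N.FG) : BddAbove (den '' N) := by
  obtain ⟨s, rfl⟩ := hN
  have hD : 0 < ∏ q ∈ s, q.den := Finset.prod_pos fun q _ => q.den_pos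
  have hle : span ℤ s ≤ denDvdSubmodule (∏ q ∈ s, q.den) :=
    span_le.2 fun q hq => Finset.dvd_prod_of_mem den hq
  exact ⟨_, by rintro _ ⟨q, hq, rfl⟩; exact Nat.le_of_dvd hD (hle hq)⟩

end Rat

theorem bddAbove_den_of_ratCast_mem_fg {M : Submodule ℤ ℝ} (hM : M.FG) :
    BddAbove (Rat.den '' {q : ℚ | (q : ℝ) ∈ M}) := by
  let ratCast : ℚ →ₗ[ℤ] ℝ := (Rat.castHom ℝ).toAddMonoidHom.toIntLinearMap
  have hfg : (M.comap ratCast).FG :=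
    fg_of_fg_map_injective ratCast Rat.cast_injective (hM.of_le (map_comap_le ratCast M))
  exact Rat.bddAbove_den_of_fg hfg

theorem sum_natCast_mul_mem_span_range {ι R : Type*} [Fintype ι] [Ring R] (α : ι → R)
    (c : ι → ℕ) : ∑ i, (c i : R) * α i ∈ span ℤ (Set.range α) :=
  sum_mem fun i _ => by
    simpa [zsmul_eq_mul] using
      smul_mem (span ℤ (Set.range α)) (c i : ℤ) (subset_span (Set.mem_range_self i))

theorem stmt_6 :
    let l : ℤ → ℝ := fun n => if n = 0 then 0 else (|n| : ℝ) + (1 / 2) ^ n.natAbs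
    ¬ ∃ (k : ℕ) (α : Fin k → ℝ), (∀ i, 0 < α i) ∧
      ∀ n : ℤ, ∃ c : Fin k → ℕ, l n = ∑ i, (c i : ℝ) * α i := by
  intro l
  rintro ⟨k, α, -, hl⟩
  have hmem (n : ℕ) (hn : n ≠ 0) : ((n + (1 / 2) ^ n : ℚ) : ℝ) ∈ span ℤ (Set.range α) := by
    obtain ⟨c, hc⟩ := hl n
    have hln : l n = ((n + (1 / 2) ^ n : ℚ) : ℝ) := by simp [l, hn]
    exact hln ▸ hc ▸ sum_natCast_mul_mem_span_range α c
  obtain ⟨D, hD⟩ := bddAbove_den_of_ratCast_mem_fg (fg_span (Set.finite_range α))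
  have hden : ((D + 1 : ℕ) + (1 / 2 : ℚ) ^ (D + 1)).den = 2 ^ (D + 1) := by
    rw [Rat.natCast_add_den, Rat.den_pow]
    norm_num
  have h2D : 2 ^ (D + 1) ≤ D := hden ▸ hD ⟨_, hmem (D + 1) D.succ_ne_zero, rfl⟩
  exact Nat.not_succ_lt_self (Nat.lt_two_pow_self.trans_le h2D)
end

section
/- Let G be a group with a word length |·| satisfying the usual axioms, and set d(g,h) := (|g|+1)(|h|+1)/(|gh⁻¹|+1). Then for all g, h, k ∈ G and all R ≥ 0: if d(g,h) ≥ e^{2R} and d(h,k) ≥ e^{2R}, then d(g,k) ≥ e^{2R}/32. Consequently, the length function l(g) = log(|g|+1) is δ-hyperbolic with δ = (1/2)·log 32. -/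
private lemma key_real (a b c x y z t : ℝ) (ha : 1 ≤ a) (hb : 1 ≤ b) (hc : 1 ≤ c)
    (hx : 1 ≤ x) (hy : 1 ≤ y) (hz : 1 ≤ z) (ht : 1 ≤ t)
    (hba : b ≤ x + a) (hbc : b ≤ y + c) (hzxy : z ≤ x + y) (hzac : z ≤ a + c)
    (hh1 : t * x ≤ a * b) (hh2 : t * y ≤ b * c) : t * z ≤ 4 * (a * c) := by
  have ht0 : (0:ℝ) < t := by linarith
  rcases le_total b t with h | h
  · have h2a : b ≤ 2 * a := by nlinarith [mul_le_mul_of_nonneg_left hba ht0.le]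
    have h2c : b ≤ 2 * c := by nlinarith [mul_le_mul_of_nonneg_left hbc ht0.le]
    nlinarith [mul_le_mul_of_nonneg_left hzxy ht0.le, mul_le_mul_of_nonneg_left h2a (by linarith : (0:ℝ) ≤ c), mul_le_mul_of_nonneg_left h2c (by linarith : (0:ℝ) ≤ a)]
  · have h2a : t ≤ 2 * a := by nlinarith [mul_le_mul_of_nonneg_left hba ht0.le]
    have h2c : t ≤ 2 * c := by nlinarith [mul_le_mul_of_nonneg_left hbc ht0.le]
    nlinarith [mul_le_mul_of_nonneg_left hzac ht0.le, mul_le_mul_of_nonneg_left h2a (by linarith : (0:ℝ) ≤ c), mul_le_mul_of_nonneg_left h2c (by linarith : (0:ℝ) ≤ a)]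

private lemma exp_log3 (a b x : ℝ) (ha : 0 < a) (hb : 0 < b) (hx : 0 < x) :
    Real.exp (2 * ((1/2) * (Real.log a + Real.log b - Real.log x))) = a * b / x := by
  rw [show 2 * ((1/2:ℝ) * (Real.log a + Real.log b - Real.log x))
      = Real.log a + Real.log b - Real.log x by ring,
    Real.exp_sub, Real.exp_add, Real.exp_log ha, Real.exp_log hb, Real.exp_log hx]

theorem stmt_8 {G : Type*} [Group G] (wl : G → ℕ)
    (h1 : ∀ g : G, wl g = 0 ↔ g = 1)
    (h2 : ∀ g : G, wl g⁻¹ = wl g)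
    (h3 : ∀ g h : G, wl (g * h) ≤ wl g + wl h) :
    let d : G → G → ℝ := fun g h => ((wl g : ℝ) + 1) * ((wl h : ℝ) + 1) / ((wl (g * h⁻¹) : ℝ) + 1)
    let l : G → ℝ := fun g => Real.log ((wl g : ℝ) + 1)
    let c : G → G → ℝ := fun g h => (1 / 2) * (l g + l h - l (g * h⁻¹))
    (∀ g h k : G, ∀ R : ℝ, 0 ≤ R →
      d g h ≥ Real.exp (2 * R) → d h k ≥ Real.exp (2 * R) → d g k ≥ Real.exp (2 * R) / 32) ∧
    (∀ g₁ g₂ g₃ : G, ∀ m : ℝ,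
      c g₁ g₂ ≥ m → c g₂ g₃ ≥ m → c g₁ g₃ ≥ m - (1 / 2) * Real.log 32) := by
  intro d l c
  -- basic positivity
  have pos : ∀ g : G, (0:ℝ) < (wl g : ℝ) + 1 := fun g => by positivity
  have one_le : ∀ g : G, (1:ℝ) ≤ (wl g : ℝ) + 1 := fun g => by
    have : (0:ℝ) ≤ (wl g : ℝ) := Nat.cast_nonneg _
    linarith
  -- word-length inequalities
  have hB : ∀ g h : G, wl h ≤ wl (g * h⁻¹) + wl g := by
    intro g h
    have e : (g * h⁻¹)⁻¹ * g = h := by group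
    calc wl h = wl ((g * h⁻¹)⁻¹ * g) := by rw [e]
      _ ≤ wl (g * h⁻¹)⁻¹ + wl g := h3 _ _
      _ = wl (g * h⁻¹) + wl g := by rw [h2]
  have hB' : ∀ h k : G, wl h ≤ wl (h * k⁻¹) + wl k := by
    intro h k
    have e : (h * k⁻¹) * k = h := by group
    calc wl h = wl ((h * k⁻¹) * k) := by rw [e]
      _ ≤ wl (h * k⁻¹) + wl k := h3 _ _
  have hTri : ∀ g h k : G, wl (g * k⁻¹) ≤ wl (g * h⁻¹) + wl (h * k⁻¹) := by
    intro g h k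
    have e : (g * h⁻¹) * (h * k⁻¹) = g * k⁻¹ := by group
    calc wl (g * k⁻¹) = wl ((g * h⁻¹) * (h * k⁻¹)) := by rw [e]
      _ ≤ wl (g * h⁻¹) + wl (h * k⁻¹) := h3 _ _
  have hAC : ∀ g k : G, wl (g * k⁻¹) ≤ wl g + wl k := by
    intro g k
    calc wl (g * k⁻¹) ≤ wl g + wl k⁻¹ := h3 _ _
      _ = wl g + wl k := by rw [h2]
  -- d ≥ 1 always
  have d_ge_one : ∀ g k : G, (1:ℝ) ≤ d g k := by
    intro g k
    have hz' : ((wl (g * k⁻¹) : ℝ)) ≤ (wl g : ℝ) + (wl k : ℝ) := by exact_mod_cast hAC g k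
    show (1:ℝ) ≤ ((wl g : ℝ) + 1) * ((wl k : ℝ) + 1) / ((wl (g * k⁻¹) : ℝ) + 1)
    rw [le_div_iff₀ (pos _)]
    nlinarith [mul_nonneg (Nat.cast_nonneg (wl g) : (0:ℝ) ≤ _) (Nat.cast_nonneg (wl k) : (0:ℝ) ≤ _)]
  -- Part 1
  have P1 : ∀ g h k : G, ∀ R : ℝ, 0 ≤ R →
      d g h ≥ Real.exp (2 * R) → d h k ≥ Real.exp (2 * R) → d g k ≥ Real.exp (2 * R) / 32 := by
    intro g h k R hR hgh hhk
    set t : ℝ := Real.exp (2 * R) with htdef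
    have ht1 : (1:ℝ) ≤ t := by
      rw [htdef]; exact Real.one_le_exp (by linarith)
    set a : ℝ := (wl g : ℝ) + 1
    set b : ℝ := (wl h : ℝ) + 1
    set cc : ℝ := (wl k : ℝ) + 1
    set x : ℝ := (wl (g * h⁻¹) : ℝ) + 1
    set y : ℝ := (wl (h * k⁻¹) : ℝ) + 1
    set z : ℝ := (wl (g * k⁻¹) : ℝ) + 1
    have hx0 : (0:ℝ) < x := pos _
    have hy0 : (0:ℝ) < y := pos _
    have hz0 : (0:ℝ) < z := pos _
    have hgh' : t * x ≤ a * b := by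
      rw [ge_iff_le, le_div_iff₀ hx0] at hgh; exact hgh
    have hhk' : t * y ≤ b * cc := by
      rw [ge_iff_le, le_div_iff₀ hy0] at hhk; exact hhk
    have hba : b ≤ x + a := by
      have := hB g h; have : ((wl h : ℝ)) ≤ (wl (g * h⁻¹) : ℝ) + (wl g : ℝ) := by exact_mod_cast this
      simp only [a, b, x]; linarith
    have hbc : b ≤ y + cc := by
      have := hB' h k; have : ((wl h : ℝ)) ≤ (wl (h * k⁻¹) : ℝ) + (wl k : ℝ) := by exact_mod_cast this
      simp only [b, cc, y]; linarith
    have hzxy : z ≤ x + y := by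
      have := hTri g h k
      have : ((wl (g * k⁻¹) : ℝ)) ≤ (wl (g * h⁻¹) : ℝ) + (wl (h * k⁻¹) : ℝ) := by exact_mod_cast this
      simp only [z, x, y]; linarith
    have hzac : z ≤ a + cc := by
      have := hAC g k
      have : ((wl (g * k⁻¹) : ℝ)) ≤ (wl g : ℝ) + (wl k : ℝ) := by exact_mod_cast this
      simp only [z, a, cc]; linarith
    have key := key_real a b cc x y z t (one_le g) (one_le h) (one_le k)
      (one_le _) (one_le _) (one_le _) ht1 hba hbc hzxy hzac hgh' hhk'
    show t / 32 ≤ a * cc / z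
    rw [div_le_div_iff₀ (by norm_num) hz0]
    nlinarith [mul_pos (pos g) (pos k)]
  refine ⟨P1, ?_⟩
  -- Part 2
  intro g₁ g₂ g₃ m h12 h23
  have exp_c : ∀ g h : G, Real.exp (2 * c g h) = d g h := by
    intro g h
    exact exp_log3 _ _ _ (pos g) (pos h) (pos (g * h⁻¹))
  have log32 : (0:ℝ) ≤ Real.log 32 := Real.log_nonneg (by norm_num)
  rcases le_total m 0 with hm | hm
  · -- c g₁ g₃ ≥ 0 since d g₁ g₃ ≥ 1
    have hd := d_ge_one g₁ g₃
    have : (0:ℝ) ≤ 2 * c g₁ g₃ := by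
      have h' : Real.exp 0 ≤ Real.exp (2 * c g₁ g₃) := by
        rw [exp_c, Real.exp_zero]; exact hd
      exact (Real.exp_le_exp.mp h')
    linarith
  · -- use part 1 with R = m
    have hd12 : d g₁ g₂ ≥ Real.exp (2 * m) := by
      rw [← exp_c]; exact Real.exp_le_exp.mpr (by linarith)
    have hd23 : d g₂ g₃ ≥ Real.exp (2 * m) := by
      rw [← exp_c]; exact Real.exp_le_exp.mpr (by linarith)
    have hd13 := P1 g₁ g₂ g₃ m hm hd12 hd23
    have hpos : (0:ℝ) < Real.exp (2 * m) / 32 := by positivity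
    have hlog : Real.log (Real.exp (2 * m) / 32) ≤ Real.log (d g₁ g₃) :=
      Real.log_le_log hpos hd13
    rw [Real.log_div (Real.exp_ne_zero _) (by norm_num), Real.log_exp] at hlog
    have : Real.log (d g₁ g₃) = 2 * c g₁ g₃ := by
      rw [← exp_c, Real.log_exp]
    linarith [this ▸ hlog]
end

section
/- Let l : G → ℝ≥0 be a graph-like length function with constants K > 0 and 0 ≤ ε < 1. Then the ball B_K = {g ∈ G : l(g) ≤ K} generates G; in particular, since B_K is finite by A4, G is finitely generated. -/
theorem stmt_16 {G : Type*} [Group G] (l : G → ℝ) (K ε : ℝ)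
    (hnonneg : ∀ g, 0 ≤ l g)
    (hA1 : ∀ g : G, l g = 0 ↔ g = 1)
    (hA2 : ∀ g : G, l g⁻¹ = l g)
    (hA3 : ∀ g h : G, l (g * h⁻¹) ≤ l g + l h)
    (hA4 : ∀ R : ℝ, 0 ≤ R → {g : G | l g ≤ R}.Finite)
    (hK : 0 < K) (hε0 : 0 ≤ ε) (hε1 : ε < 1)
    (hA5 : ∀ g : G, l g > K → ∃ x : G, 0 < l x ∧ l x ≤ K ∧
      (1 / 2) * (l (g * x⁻¹) + l x⁻¹ - l g) ≤ ε * l x / 2) :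
    Subgroup.closure {g : G | l g ≤ K} = ⊤ := by
  by_cases hall : ∀ g : G, l g ≤ K
  · rw [Subgroup.eq_top_iff']
    intro g; exact Subgroup.subset_closure (hall g)
  push_neg at hall
  obtain ⟨g0, hg0⟩ := hall
  obtain ⟨x0, hx0pos, hx0le, _⟩ := hA5 g0 hg0
  have hTfin : ({x : G | l x ≤ K ∧ 0 < l x}).Finite :=
    (hA4 K hK.le).subset (fun x hx => hx.1)
  have hne : hTfin.toFinset.Nonempty := ⟨x0, by simp [hx0le, hx0pos]⟩
  set δ := hTfin.toFinset.inf' hne l with hδ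
  have hδpos : 0 < δ := by
    obtain ⟨x, hx, hxe⟩ := Finset.exists_mem_eq_inf' hne l
    have := (Set.Finite.mem_toFinset _).mp hx
    rw [hδ, hxe]; exact this.2
  set c := (1 - ε) * δ with hc
  have hcpos : 0 < c := mul_pos (by linarith) hδpos
  have key : ∀ n : ℕ, ∀ g : G, l g ≤ K + n * c →
      g ∈ Subgroup.closure {g : G | l g ≤ K} := by
    intro n
    induction n with
    | zero => intro g hg; exact Subgroup.subset_closure (by simpa using hg)
    | succ n ih =>
      intro g hg
      by_cases h : l g ≤ K
      · exact Subgroup.subset_closure h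
      push_neg at h
      obtain ⟨x, hxpos, hxle, hx5⟩ := hA5 g h
      have hxmem : x ∈ hTfin.toFinset := by
        rw [Set.Finite.mem_toFinset]; exact ⟨hxle, hxpos⟩
      have hδle : δ ≤ l x := Finset.inf'_le l hxmem
      have h2 : l (g * x⁻¹) ≤ l g - (1 - ε) * l x := by
        have hx2 := hA2 x; nlinarith [hx5]
      have h3 : l (g * x⁻¹) ≤ K + n * c := by
        have hmono : (1 - ε) * δ ≤ (1 - ε) * l x := by nlinarith
        push_cast at hg ⊢
        nlinarith
      have hmem := ih (g * x⁻¹) h3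
      have hgx : g = (g * x⁻¹) * x := by group
      rw [hgx]
      exact mul_mem hmem (Subgroup.subset_closure hxle)
  rw [Subgroup.eq_top_iff']
  intro g
  obtain ⟨n, hn⟩ := exists_nat_ge ((l g - K) / c)
  apply key n
  have := (div_le_iff₀ hcpos).mp hn
  linarith
end

section
/- Let l : G → ℝ≥0 satisfy A1, A2, A3 and A5 with constants K > 0, 0 ≤ ε < 1, and suppose B_K = {g : l(g) ≤ K} is finite. Set λ = 1/(1−ε). Then for every nontrivial g ∈ G there exists a finite sequence x₀, …, x_k ∈ G with: (i) 0 < l(xᵢ) ≤ K for each i; (ii) g = x_k·x_{k−1}·…·x₀; (iii) (1/λ)·Σᵢ l(xᵢ) ≤ l(g) ≤ Σᵢ l(xᵢ). -/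
private lemma stmt_17_aux {G : Type*} [Group G] (l : G → ℝ) (K ε δ : ℝ)
    (hnonneg : ∀ g, 0 ≤ l g)
    (hA1 : ∀ g : G, l g = 0 ↔ g = 1)
    (hA2 : ∀ g : G, l g⁻¹ = l g)
    (hA3 : ∀ g h : G, l (g * h⁻¹) ≤ l g + l h)
    (hε0 : 0 ≤ ε) (hε1 : ε < 1)
    (hA5 : ∀ g : G, l g > K → ∃ x : G, 0 < l x ∧ l x ≤ K ∧
      (1 / 2) * (l (g * x⁻¹) + l x⁻¹ - l g) ≤ ε * l x / 2)
    (hδ : 0 < δ) (hδmin : ∀ x : G, 0 < l x → l x ≤ K → δ ≤ l x) :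
    ∀ n : ℕ, ∀ g : G, g ≠ 1 → l g ≤ K + n * ((1 - ε) * δ) →
      ∃ (k : ℕ) (x : Fin (k + 1) → G),
        (∀ i, 0 < l (x i) ∧ l (x i) ≤ K) ∧
        g = ((List.ofFn x).reverse).prod ∧
        (1 - ε) * (∑ i, l (x i)) ≤ l g ∧ l g ≤ ∑ i, l (x i) := by
  have base : ∀ g : G, g ≠ 1 → l g ≤ K →
      ∃ (k : ℕ) (x : Fin (k + 1) → G),
        (∀ i, 0 < l (x i) ∧ l (x i) ≤ K) ∧
        g = ((List.ofFn x).reverse).prod ∧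
        (1 - ε) * (∑ i, l (x i)) ≤ l g ∧ l g ≤ ∑ i, l (x i) := by
    intro g hg hle
    have hpos : 0 < l g := lt_of_le_of_ne (hnonneg g) (fun h => hg ((hA1 g).mp h.symm))
    refine ⟨0, fun _ => g, fun i => ⟨hpos, hle⟩, by simp, ?_, by simp⟩
    rw [Fin.sum_univ_one]
    nlinarith
  intro n
  induction n with
  | zero => intro g hg hle; simp at hle; exact base g hg hle
  | succ n ih =>
    intro g hg hle
    by_cases hgK : l g ≤ K
    · exact base g hg hgK
    · push_neg at hgK
      obtain ⟨x, hx0, hxK, hxc⟩ := hA5 g hgK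
      have hgx : l (g * x⁻¹) ≤ l g - (1 - ε) * l x := by
        rw [hA2] at hxc; linarith
      have hne : g * x⁻¹ ≠ 1 := by
        intro h
        have hgxe : g = x := mul_inv_eq_one.mp h
        rw [hgxe] at hgK; linarith
      have hδx : δ ≤ l x := hδmin x hx0 hxK
      have hle' : l (g * x⁻¹) ≤ K + n * ((1 - ε) * δ) := by
        have h1 : (1 - ε) * δ ≤ (1 - ε) * l x :=
          mul_le_mul_of_nonneg_left hδx (by linarith)
        push_cast at hle ⊢
        nlinarith
      obtain ⟨k, x', hx', hprod, hlow, hup⟩ := ih (g * x⁻¹) hne hle'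
      have hofn : List.ofFn (Fin.cons x x' : Fin (k + 2) → G) = x :: List.ofFn x' := by
        rw [List.ofFn_succ]
        simp [Fin.cons_succ]
      have hsum : (∑ i, l ((Fin.cons x x' : Fin (k + 2) → G) i))
          = l x + ∑ i, l (x' i) := by
        rw [Fin.sum_univ_succ]
        simp [Fin.cons_succ]
      have hA3' : l g ≤ l (g * x⁻¹) + l x := by
        have := hA3 (g * x⁻¹) x⁻¹
        simpa [hA2] using this
      refine ⟨k + 1, Fin.cons x x', ?_, ?_, ?_, ?_⟩
      · intro i
        refine Fin.cases ?_ (fun j => ?_) i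
        · simpa using ⟨hx0, hxK⟩
        · simpa using hx' j
      · rw [hofn, List.reverse_cons, List.prod_append, ← hprod]
        simp
      · rw [hsum, mul_add]; linarith
      · rw [hsum]; linarith

theorem stmt_17 {G : Type*} [Group G] (l : G → ℝ) (K ε : ℝ)
    (hnonneg : ∀ g, 0 ≤ l g)
    (hA1 : ∀ g : G, l g = 0 ↔ g = 1)
    (hA2 : ∀ g : G, l g⁻¹ = l g)
    (hA3 : ∀ g h : G, l (g * h⁻¹) ≤ l g + l h)
    (hK : 0 < K) (hε0 : 0 ≤ ε) (hε1 : ε < 1)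
    (hA5 : ∀ g : G, l g > K → ∃ x : G, 0 < l x ∧ l x ≤ K ∧
      (1 / 2) * (l (g * x⁻¹) + l x⁻¹ - l g) ≤ ε * l x / 2)
    (hBK : {g : G | l g ≤ K}.Finite) :
    let lam : ℝ := 1 / (1 - ε)
    ∀ g : G, g ≠ 1 →
      ∃ (k : ℕ) (x : Fin (k + 1) → G),
        (∀ i, 0 < l (x i) ∧ l (x i) ≤ K) ∧
        g = ((List.ofFn x).reverse).prod ∧
        (1 / lam) * (∑ i, l (x i)) ≤ l g ∧ l g ≤ ∑ i, l (x i) := by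
  intro lam g hg
  have h1ε : (0:ℝ) < 1 - ε := by linarith
  have hlam : (1:ℝ) / lam = 1 - ε := by
    simp only [lam]
    rw [one_div_one_div]
  by_cases hex : ∃ y : G, 0 < l y ∧ l y ≤ K
  · obtain ⟨y, hy0, hyK⟩ := hex
    set S : Finset G := hBK.toFinset.filter (fun z => 0 < l z) with hS
    have hyS : y ∈ S := by
      simp [hS, Set.Finite.mem_toFinset, hyK, hy0]
    have hSne : S.Nonempty := ⟨y, hyS⟩
    set δ : ℝ := S.inf' hSne l with hδdef
    have hδpos : 0 < δ := by
      rw [hδdef, Finset.lt_inf'_iff]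
      intro z hz
      exact (Finset.mem_filter.mp hz).2
    have hδmin : ∀ x : G, 0 < l x → l x ≤ K → δ ≤ l x := by
      intro x hx0 hxK
      apply Finset.inf'_le
      simp [hS, Set.Finite.mem_toFinset, hxK, hx0]
    obtain ⟨n, hn⟩ := exists_nat_ge (l g / ((1 - ε) * δ))
    have hpos : 0 < (1 - ε) * δ := mul_pos h1ε hδpos
    have hgn : l g ≤ K + n * ((1 - ε) * δ) := by
      have : l g ≤ n * ((1 - ε) * δ) := by
        rw [div_le_iff₀ hpos] at hn; linarith
      linarith
    obtain ⟨k, x, h1, h2, h3, h4⟩ :=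
      stmt_17_aux l K ε δ hnonneg hA1 hA2 hA3 hε0 hε1 hA5 hδpos hδmin n g hg hgn
    exact ⟨k, x, h1, h2, by rw [hlam]; exact h3, h4⟩
  · exfalso
    push_neg at hex
    have hpos : 0 < l g := lt_of_le_of_ne (hnonneg g) (fun h => hg ((hA1 g).mp h.symm))
    by_cases hgK : l g ≤ K
    · exact absurd hgK (not_le.mpr (hex g hpos))
    · push_neg at hgK
      obtain ⟨x, hx0, hxK, -⟩ := hA5 g hgK
      exact absurd hxK (not_le.mpr (hex x hx0))
end

section
/- Let l : G → ℝ≥0 satisfy A1, A2, A3 and A5 with constants K > 0, 0 ≤ ε < 1, and suppose B_K = {g : l(g) ≤ K} is finite. Then for every R ≥ 0, the ball B_R = {g : l(g) ≤ R} is finite. -/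
theorem stmt_18 {G : Type*} [Group G] (l : G → ℝ) (K ε : ℝ)
    (hnonneg : ∀ g, 0 ≤ l g)
    (hA1 : ∀ g : G, l g = 0 ↔ g = 1)
    (hA2 : ∀ g : G, l g⁻¹ = l g)
    (hA3 : ∀ g h : G, l (g * h⁻¹) ≤ l g + l h)
    (hK : 0 < K) (hε0 : 0 ≤ ε) (hε1 : ε < 1)
    (hA5 : ∀ g : G, l g > K → ∃ x : G, 0 < l x ∧ l x ≤ K ∧
      (1 / 2) * (l (g * x⁻¹) + l x⁻¹ - l g) ≤ ε * l x / 2)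
    (hBK : {g : G | l g ≤ K}.Finite) :
    ∀ R : ℝ, 0 ≤ R → {g : G | l g ≤ R}.Finite := by
  intro R hR
  set S : Set G := {g : G | 0 < l g ∧ l g ≤ K} with hSdef
  have hS : S.Finite := hBK.subset (fun g hg => hg.2)
  by_cases hne : S.Nonempty
  · obtain ⟨x0, hx0S, hmin⟩ := Set.exists_min_image S l hS hne
    set μ : ℝ := l x0 with hμdef
    have hμpos : 0 < μ := hx0S.1
    set δ : ℝ := (1 - ε) * μ with hδdef
    have hδpos : 0 < δ := mul_pos (by linarith) hμpos
    have key0 : ∀ g : G, l g ≤ K →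
        ∃ w : List G, (∀ a ∈ w, a ∈ S) ∧ w.length ≤ 0 + 1 ∧ w.prod = g := by
      intro g hg
      by_cases hg1 : g = 1
      · exact ⟨[], by simp, by simp, by simp [hg1]⟩
      · have : 0 < l g := lt_of_le_of_ne (hnonneg g) (fun h => hg1 ((hA1 g).1 h.symm))
        exact ⟨[g], by simp [hSdef]; exact ⟨this, hg⟩, by simp, by simp⟩
    -- key lemma
    have key : ∀ n : ℕ, ∀ g : G, l g ≤ K + n * δ →
        ∃ w : List G, (∀ a ∈ w, a ∈ S) ∧ w.length ≤ n + 1 ∧ w.prod = g := by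
      intro n
      induction n with
      | zero =>
        intro g hg
        simp only [Nat.cast_zero, zero_mul, add_zero] at hg
        exact key0 g hg
      | succ n ih =>
        intro g hg
        by_cases hgK : l g ≤ K
        · obtain ⟨w, hw1, hw2, hw3⟩ := key0 g hgK
          exact ⟨w, hw1, le_trans hw2 (by omega), hw3⟩
        · push_neg at hgK
          obtain ⟨x, hx1, hx2, hx3⟩ := hA5 g hgK
          have hxS : x ∈ S := ⟨hx1, hx2⟩
          have hμx : μ ≤ l x := hmin x hxS
          have hdec : l (g * x⁻¹) ≤ l g - δ := by
            rw [hA2] at hx3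
            nlinarith
          have : l (g * x⁻¹) ≤ K + n * δ := by
            push_cast at hg ⊢
            nlinarith
          obtain ⟨w, hw1, hw2, hw3⟩ := ih (g * x⁻¹) this
          refine ⟨w ++ [x], ?_, ?_, ?_⟩
          · intro a ha
            rcases List.mem_append.1 ha with h | h
            · exact hw1 a h
            · simp at h; subst h; exact hxS
          · simp; omega
          · simp [hw3]
    -- choose n
    set n : ℕ := ⌈R / δ⌉₊ with hn
    have hRn : R ≤ K + n * δ := by
      have h1 : R / δ ≤ (n : ℝ) := Nat.le_ceil _
      have h2 : R ≤ n * δ := by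
        rw [div_le_iff₀ hδpos] at h1
        linarith
      linarith
    haveI : Finite ↥S := hS.to_subtype
    have hfin : {w : List ↥S | w.length ≤ n + 1}.Finite := List.finite_length_le _ _
    have himg : {g : G | l g ≤ R} ⊆
        (fun w : List ↥S => (w.map Subtype.val).prod) '' {w | w.length ≤ n + 1} := by
      intro g hg
      obtain ⟨w, hw1, hw2, hw3⟩ := key n g (le_trans hg hRn)
      refine ⟨w.attach.map (fun a => ⟨a.1, hw1 a.1 a.2⟩), by simpa using hw2, ?_⟩
      simpa using hw3
    exact (hfin.image _).subset himg
  · -- S empty: every element has l g ≤ K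
    apply hBK.subset
    intro g hg
    by_contra hgK
    simp only [Set.mem_setOf_eq, not_le] at hgK
    obtain ⟨x, hx1, hx2, _⟩ := hA5 g hgK
    exact hne ⟨x, hx1, hx2⟩
end

section
/- Let l : G → ℝ≥0 be a graph-like length function with constants K > 0, 0 ≤ ε < 1, and set λ = 1/(1−ε). Define l_S : G → ℝ≥0 as the weighted word length with respect to the generating set S = B_K \ {1}: l_S(1) = 0 and for g ≠ 1, l_S(g) = inf{ Σᵢ l(yᵢ) : y₀, …, y_k ∈ S, y_k·…·y₀ = g }. Then for all g ∈ G: (1/λ)·l_S(g) ≤ l(g) ≤ l_S(g). In particular, l is bi-Lipschitz equivalent to l_S. -/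
theorem stmt_19 {G : Type*} [Group G] (l : G → ℝ) (K ε : ℝ)
    (hnonneg : ∀ g, 0 ≤ l g)
    (hA1 : ∀ g : G, l g = 0 ↔ g = 1)
    (hA2 : ∀ g : G, l g⁻¹ = l g)
    (hA3 : ∀ g h : G, l (g * h⁻¹) ≤ l g + l h)
    (hA4 : ∀ R : ℝ, 0 ≤ R → {g : G | l g ≤ R}.Finite)
    (hK : 0 < K) (hε0 : 0 ≤ ε) (hε1 : ε < 1)
    (hA5 : ∀ g : G, l g > K → ∃ x : G, 0 < l x ∧ l x ≤ K ∧
      (1 / 2) * (l (g * x⁻¹) + l x⁻¹ - l g) ≤ ε * l x / 2)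
    (lS : G → ℝ)
    (hlS1 : lS 1 = 0)
    (hlS : ∀ g : G, g ≠ 1 → lS g = sInf {s : ℝ |
      ∃ (k : ℕ) (y : Fin (k + 1) → G),
        (∀ i, y i ≠ 1 ∧ l (y i) ≤ K) ∧
        ((List.ofFn y).reverse).prod = g ∧
        s = ∑ i, l (y i)}) :
    let lam : ℝ := 1 / (1 - ε)
    ∀ g : G, (1 / lam) * lS g ≤ l g ∧ l g ≤ lS g := by
  intro lam g
  have h1ε : (0:ℝ) < 1 - ε := by linarith
  set P : G → Set ℝ := fun g => {s : ℝ |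
      ∃ (k : ℕ) (y : Fin (k + 1) → G),
        (∀ i, y i ≠ 1 ∧ l (y i) ≤ K) ∧
        ((List.ofFn y).reverse).prod = g ∧
        s = ∑ i, l (y i)} with hP
  have hl1 : l 1 = 0 := (hA1 1).mpr rfl
  have hmul : ∀ a b : G, l (a * b) ≤ l a + l b := by
    intro a b
    have := hA3 a b⁻¹
    rw [inv_inv, hA2] at this
    exact this
  have hlist : ∀ L : List G, l L.prod ≤ (L.map l).sum := by
    intro L
    induction L with
    | nil => simp [hl1]
    | cons a L ih =>
      simp only [List.prod_cons, List.map_cons, List.sum_cons]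
      exact le_trans (hmul a L.prod) (by linarith)
  have hlower : ∀ g : G, ∀ t ∈ P g, l g ≤ t := by
    rintro g t ⟨k, y, hy, hprod, rfl⟩
    calc l g = l ((List.ofFn y).reverse.prod) := by rw [hprod]
      _ ≤ (((List.ofFn y).reverse).map l).sum := hlist _
      _ = ∑ i, l (y i) := by
          rw [List.map_reverse, List.sum_reverse, List.map_ofFn, List.sum_ofFn]
          rfl
  have hexist : ∀ n : ℕ, ∀ g : G, g ≠ 1 → Set.ncard {h : G | l h < l g} ≤ n →
      ∃ s ∈ P g, s ≤ l g / (1 - ε) := by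
    intro n
    induction n with
    | zero =>
      intro g hg hcard
      exfalso
      have hpos : 0 < l g :=
        lt_of_le_of_ne (hnonneg g) (fun h => hg ((hA1 g).mp h.symm))
      have h1 : (1:G) ∈ {h : G | l h < l g} := by
        simpa [hl1] using hpos
      have hfin : {h : G | l h < l g}.Finite :=
        (hA4 (l g) (hnonneg g)).subset (fun h hh => le_of_lt (Set.mem_setOf_eq ▸ hh))
      have := (Set.ncard_pos hfin).mpr ⟨1, h1⟩
      omega
    | succ n ih =>
      intro g hg hcard
      by_cases hgK : l g ≤ K
      · refine ⟨l g, ⟨0, fun _ => g, fun i => ⟨hg, hgK⟩, by simp, by simp⟩, ?_⟩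
        rw [le_div_iff₀ h1ε]
        nlinarith [hnonneg g]
      · push_neg at hgK
        obtain ⟨x, hx0, hxK, hxc⟩ := hA5 g hgK
        rw [hA2] at hxc
        have hg' : l (g * x⁻¹) ≤ l g - (1 - ε) * l x := by linarith
        have hlt : l (g * x⁻¹) < l g := by nlinarith
        have hne : g * x⁻¹ ≠ 1 := by
          intro h
          have hgx : g = x := mul_inv_eq_one.mp h
          rw [hgx] at hgK
          linarith
        have hfin : {h : G | l h < l g}.Finite :=
          (hA4 (l g) (hnonneg g)).subset (fun h hh => le_of_lt (Set.mem_setOf_eq ▸ hh))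
        have hssub : {h : G | l h < l (g * x⁻¹)} ⊂ {h : G | l h < l g} := by
          constructor
          · intro h hh; exact lt_trans hh hlt
          · intro hsub
            have : l (g * x⁻¹) < l (g * x⁻¹) := hsub hlt
            exact absurd this (lt_irrefl _)
        have hcard' : Set.ncard {h : G | l h < l (g * x⁻¹)} ≤ n := by
          have := Set.ncard_lt_ncard hssub hfin
          omega
        obtain ⟨s', ⟨k, y, hy, hprod, hsum⟩, hs'⟩ := ih (g * x⁻¹) hne hcard'
        refine ⟨l x + s', ⟨k + 1, Fin.cons x y, ?_, ?_, ?_⟩, ?_⟩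
        · intro i
          refine Fin.cases ?_ ?_ i
          · refine ⟨fun h => ?_, hxK⟩
            rw [Fin.cons_zero] at h
            rw [h, hl1] at hx0
            exact lt_irrefl _ hx0
          · intro j
            simpa using hy j
        · rw [List.ofFn_succ]
          simp only [Fin.cons_zero, Fin.cons_succ]
          rw [List.reverse_cons, List.prod_append, List.prod_singleton]
          rw [hprod, inv_mul_cancel_right]
        · rw [Fin.sum_univ_succ]
          simp only [Fin.cons_zero, Fin.cons_succ]
          rw [← hsum]
        · rw [le_div_iff₀ h1ε] at hs' ⊢
          nlinarith
  by_cases hg : g = 1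
  · subst hg
    simp [hlS1, hl1]
  · obtain ⟨s, hsP, hsle⟩ := hexist _ g hg le_rfl
    have hbb : BddBelow (P g) := ⟨l g, hlower g⟩
    have hlSg : lS g = sInf (P g) := hlS g hg
    constructor
    · have h1 : sInf (P g) ≤ s := csInf_le hbb hsP
      have h2 : sInf (P g) ≤ l g / (1 - ε) := le_trans h1 hsle
      have hlam : (1:ℝ) / lam = 1 - ε := by
        show (1:ℝ) / (1 / (1 - ε)) = 1 - ε
        rw [one_div_one_div]
      rw [hlam, hlSg]
      rw [le_div_iff₀ h1ε] at h2
      nlinarith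
    · rw [hlSg]
      exact le_csInf ⟨s, hsP⟩ (hlower g)
end
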